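/- Let C₁ be a channel from a finite set X₁ to a finite set Y₁ of traces and C₂ a channel from a finite set X₂ to a finite set Y₂ of traces. Assume the traces of Y₁ and Y₂ share no actions: for all y₁ ∈ Y₁, y₂ ∈ Y₂ and all actions α occurring in y₁ and β occurring in y₂, α ≠ β. Then for every prior π on X₁×X₂ and every scheduler S on Y₁, Y₂, both the mutual information and the min-entropy leakage of the scheduled composition equal those of the parallel composition: I(π, Comp_S(C₁,C₂)) = I(π, C₁×C₂) and L(π, Comp_S(C₁,C₂)) = L(π, C₁×C₂). -/

import Mathlib

open scoped Classical BigOperators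

noncomputable section

/-- A (row-stochastic) channel matrix whose outputs range over a finite set `Ys`. -/
def FIsChannel {X B : Type*} (Ys : Finset B) (C : X → B → ℝ) : Prop :=
  (∀ x y, 0 ≤ C x y) ∧ ∀ x, ∑ y ∈ Ys, C x y = 1

/-- A prior (probability distribution). -/
def IsPrior {X : Type*} [Fintype X] (π : X → ℝ) : Prop :=
  (∀ x, 0 ≤ π x) ∧ ∑ x, π x = 1

/-- Cascade composition of channels (matrix product), outputs of the first ranging
over the finite set `Ys`. -/
def Fcascade {X B Z : Type*} (Ys : Finset B) (C : X → B → ℝ) (D : B → Z → ℝ) :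
    X → Z → ℝ :=
  fun x z => ∑ y ∈ Ys, C x y * D y z

/-- Mutual information (base-2), with `0`-probability terms taken to be `0`. -/
def FMI {X B : Type*} [Fintype X] (π : X → ℝ) (Ys : Finset B) (C : X → B → ℝ) : ℝ :=
  ∑ x, ∑ y ∈ Ys, if π x * C x y = 0 then 0
    else π x * C x y * Real.logb 2 (C x y / ∑ x', π x' * C x' y)

/-- Prior vulnerability. -/
def Vprior {X : Type*} [Fintype X] [Nonempty X] (π : X → ℝ) : ℝ :=
  Finset.univ.sup' Finset.univ_nonempty π

/-- Posterior vulnerability. -/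
def FVpost {X B : Type*} [Fintype X] [Nonempty X]
    (π : X → ℝ) (Ys : Finset B) (C : X → B → ℝ) : ℝ :=
  ∑ y ∈ Ys, Finset.univ.sup' Finset.univ_nonempty (fun x => π x * C x y)

/-- Min-entropy leakage. -/
def FMEL {X B : Type*} [Fintype X] [Nonempty X]
    (π : X → ℝ) (Ys : Finset B) (C : X → B → ℝ) : ℝ :=
  Real.logb 2 (FVpost π Ys C) - Real.logb 2 (Vprior π)

/-- Min-capacity: supremum of min-entropy leakage over all priors. -/
def FMinCap {X B : Type*} [Fintype X] [Nonempty X] (Ys : Finset B) (C : X → B → ℝ) : ℝ :=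
  sSup {l : ℝ | ∃ π : X → ℝ, IsPrior π ∧ l = FMEL π Ys C}

/-- All interleavings (shuffles) of two traces. -/
def interleavings {A : Type*} : List A → List A → List (List A)
  | [], ys => [ys]
  | x :: xs, [] => [x :: xs]
  | x :: xs, y :: ys =>
      ((interleavings xs (y :: ys)).map (x :: ·)) ++
        ((interleavings (x :: xs) ys).map (y :: ·))
termination_by l₁ l₂ => l₁.length + l₂.length

/-- The interleaving `Int(y₁, y₂)` of two traces, as a finite set. -/
def IntF {A : Type*} [DecidableEq A] (y₁ y₂ : List A) : Finset (List A) :=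
  (interleavings y₁ y₂).toFinset

/-- The interleaving `Int(Y₁, Y₂)` of two finite sets of traces. -/
def IntSet {A : Type*} [DecidableEq A] (Y₁ Y₂ : Finset (List A)) : Finset (List A) :=
  Y₁.biUnion fun y₁ => Y₂.biUnion fun y₂ => IntF y₁ y₂

/-- A scheduler on `Y₁`, `Y₂`: for each pair of traces it yields a probability
distribution supported on their interleavings. -/
def IsScheduler {A : Type*} [DecidableEq A] (Y₁ Y₂ : Finset (List A))
    (S : List A → List A → List A → ℝ) : Prop :=
  ∀ y₁ ∈ Y₁, ∀ y₂ ∈ Y₂,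
    (∀ y, 0 ≤ S y₁ y₂ y) ∧ (∀ y, y ∉ IntF y₁ y₂ → S y₁ y₂ y = 0) ∧
      ∑ y ∈ IntF y₁ y₂, S y₁ y₂ y = 1

/-- The scheduled composition of two channels with respect to a scheduler. -/
def Comp {A X₁ X₂ : Type*} (Y₁ Y₂ : Finset (List A))
    (C₁ : X₁ → List A → ℝ) (C₂ : X₂ → List A → ℝ)
    (S : List A → List A → List A → ℝ) : X₁ × X₂ → List A → ℝ :=
  fun x y => ∑ y₁ ∈ Y₁, ∑ y₂ ∈ Y₂, C₁ x.1 y₁ * C₂ x.2 y₂ * S y₁ y₂ y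

/-- The (disjoint) parallel composition of two channels. -/
def Par {A X₁ X₂ : Type*} (C₁ : X₁ → List A → ℝ) (C₂ : X₂ → List A → ℝ) :
    X₁ × X₂ → List A × List A → ℝ :=
  fun x y => C₁ x.1 y.1 * C₂ x.2 y.2

/-
Since no action is shared, a trace `y ∈ Int(y₁, y₂)` remembers `y₁` and `y₂`: they are the
subsequences of `y` made of the actions occurring in `Y₁`, resp. not occurring in `Y₁`. Hence the
sets `Int(y₁, y₂)` are pairwise disjoint, and on `Int(y₁, y₂)` the scheduled composition is the
parallel composition at `(y₁, y₂)` times the scheduler weight `S(y₁, y₂)[y]`. Splitting an output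
into disjoint blocks with weights summing to one changes neither the mutual information (each
term scales by the weight, the logarithm being unchanged) nor the posterior vulnerability
(the maximum scales by the nonnegative weight).
-/

open Finset

theorem filter_of_mem_interleavings {A : Type*} (p : A → Bool) :
    ∀ (l₁ l₂ : List A), ∀ y ∈ interleavings l₁ l₂,
      (∀ a ∈ l₁, p a) → (∀ a ∈ l₂, p a = false) →
      y.filter p = l₁ ∧ y.filter (fun a => !p a) = l₂ := by
  intro l₁ l₂
  induction l₁, l₂ using interleavings.induct with
  | case1 l₂ =>
    intro y hy _ h₂
    rw [interleavings, List.mem_singleton] at hy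
    subst hy
    exact ⟨List.filter_eq_nil_iff.2 fun a ha => by simp [h₂ a ha],
      List.filter_eq_self.2 fun a ha => by simp [h₂ a ha]⟩
  | case2 a l₁ =>
    intro y hy h₁ _
    rw [interleavings, List.mem_singleton] at hy
    subst hy
    exact ⟨List.filter_eq_self.2 h₁, List.filter_eq_nil_iff.2 fun b hb => by simp [h₁ b hb]⟩
  | case3 a l₁ b l₂ ih₁ ih₂ =>
    intro y hy h₁ h₂
    rw [interleavings] at hy
    simp only [List.mem_append, List.mem_map] at hy
    rcases hy with ⟨z, hz, rfl⟩ | ⟨z, hz, rfl⟩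
    · obtain ⟨e₁, e₂⟩ := ih₁ z hz (fun c hc => h₁ c (List.mem_cons_of_mem _ hc)) h₂
      simp [h₁ a List.mem_cons_self, e₁, e₂]
    · obtain ⟨e₁, e₂⟩ := ih₂ z hz h₁ (fun c hc => h₂ c (List.mem_cons_of_mem _ hc))
      simp [h₂ b List.mem_cons_self, e₁, e₂]

section Interleaving

variable {A : Type*} [DecidableEq A] {Y₁ Y₂ : Finset (List A)}

theorem filter_eq_of_mem_IntF
    (hact : ∀ y₁ ∈ Y₁, ∀ y₂ ∈ Y₂, ∀ α ∈ y₁, ∀ β ∈ y₂, α ≠ β)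
    {q : List A × List A} (hq : q ∈ Y₁ ×ˢ Y₂) {y : List A} (hy : y ∈ IntF q.1 q.2) :
    (y.filter fun a => decide (∃ y₁ ∈ Y₁, a ∈ y₁),
      y.filter fun a => !decide (∃ y₁ ∈ Y₁, a ∈ y₁)) = q := by
  rw [mem_product] at hq
  rw [IntF, List.mem_toFinset] at hy
  obtain ⟨e₁, e₂⟩ := filter_of_mem_interleavings (fun a => decide (∃ y₁ ∈ Y₁, a ∈ y₁))
    q.1 q.2 y hy (fun a ha => by simpa using ⟨q.1, hq.1, ha⟩)
    (fun a ha => by simpa using fun y₁ hy₁ hay₁ => hact y₁ hy₁ q.2 hq.2 a hay₁ a ha rfl)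
  rw [e₁, e₂]

theorem pairwiseDisjoint_IntF
    (hact : ∀ y₁ ∈ Y₁, ∀ y₂ ∈ Y₂, ∀ α ∈ y₁, ∀ β ∈ y₂, α ≠ β) :
    (↑(Y₁ ×ˢ Y₂) : Set (List A × List A)).PairwiseDisjoint fun q => IntF q.1 q.2 := by
  intro q hq q' hq' hne
  refine Finset.disjoint_left.2 fun y hy hy' => hne ?_
  rw [← filter_eq_of_mem_IntF hact hq hy, filter_eq_of_mem_IntF hact hq' hy']

theorem IntSet_eq_biUnion :
    IntSet Y₁ Y₂ = (Y₁ ×ˢ Y₂).biUnion fun q => IntF q.1 q.2 := by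
  ext y
  simp [IntSet]

theorem Comp_eq_Par_mul {X₁ X₂ : Type*} (C₁ : X₁ → List A → ℝ) (C₂ : X₂ → List A → ℝ)
    {S : List A → List A → List A → ℝ} (hS : IsScheduler Y₁ Y₂ S)
    (hact : ∀ y₁ ∈ Y₁, ∀ y₂ ∈ Y₂, ∀ α ∈ y₁, ∀ β ∈ y₂, α ≠ β)
    (x : X₁ × X₂) {q : List A × List A} (hq : q ∈ Y₁ ×ˢ Y₂) {y : List A}
    (hy : y ∈ IntF q.1 q.2) :
    Comp Y₁ Y₂ C₁ C₂ S x y = Par C₁ C₂ x q * S q.1 q.2 y := by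
  rw [Comp, ← sum_product', sum_eq_single_of_mem q hq]
  · rfl
  intro q' hq' hne
  have hy' : y ∉ IntF q'.1 q'.2 := fun hy' =>
    Finset.disjoint_left.1 (pairwiseDisjoint_IntF hact hq' hq hne) hy' hy
  rw [mem_product] at hq'
  rw [(hS q'.1 hq'.1 q'.2 hq'.2).2.1 y hy', mul_zero]

end Interleaving

theorem ite_mul_logb_mul_right (p c t s : ℝ) :
    (if p * (c * s) = 0 then 0 else p * (c * s) * Real.logb 2 (c * s / (t * s))) =
      s * if p * c = 0 then 0 else p * c * Real.logb 2 (c / t) := by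
  rcases eq_or_ne s 0 with rfl | hs
  · simp
  rw [mul_div_mul_right _ _ hs, ← mul_assoc]
  by_cases hpc : p * c = 0
  · simp [hpc]
  · rw [if_neg (mul_ne_zero hpc hs), if_neg hpc]
    ring

section Refinement

/- A channel `C` refining `D`: each output `q ∈ Qs` of `D` is split into the block `T q` of
outputs of `C`, with weights `K q`. -/
variable {X Q Z : Type*} [Fintype X] [DecidableEq Z] {π : X → ℝ} {Qs : Finset Q}
  {T : Q → Finset Z} {K : Q → Z → ℝ} {C : X → Z → ℝ} {D : X → Q → ℝ}

theorem FMI_biUnion_of_eq_mul (hT : (↑Qs : Set Q).PairwiseDisjoint T)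
    (hK : ∀ q ∈ Qs, ∑ z ∈ T q, K q z = 1)
    (hC : ∀ x, ∀ q ∈ Qs, ∀ z ∈ T q, C x z = D x q * K q z) :
    FMI π (Qs.biUnion T) C = FMI π Qs D := by
  unfold FMI
  refine sum_congr rfl fun x _ => ?_
  rw [sum_biUnion hT]
  refine sum_congr rfl fun q hq => ?_
  have hterm : ∀ z ∈ T q,
      (if π x * C x z = 0 then 0
        else π x * C x z * Real.logb 2 (C x z / ∑ x', π x' * C x' z)) =
        K q z * if π x * D x q = 0 then 0
          else π x * D x q * Real.logb 2 (D x q / ∑ x', π x' * D x' q) := by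
    intro z hz
    have hout : ∑ x', π x' * C x' z = (∑ x', π x' * D x' q) * K q z := by
      rw [sum_mul]
      exact sum_congr rfl fun x' _ => by rw [hC x' q hq z hz, mul_assoc]
    rw [hout, hC x q hq z hz, ite_mul_logb_mul_right]
  rw [sum_congr rfl hterm, ← sum_mul, hK q hq, one_mul]

theorem FVpost_biUnion_of_eq_mul [Nonempty X] (hT : (↑Qs : Set Q).PairwiseDisjoint T)
    (hK₀ : ∀ q ∈ Qs, ∀ z ∈ T q, 0 ≤ K q z) (hK : ∀ q ∈ Qs, ∑ z ∈ T q, K q z = 1)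
    (hC : ∀ x, ∀ q ∈ Qs, ∀ z ∈ T q, C x z = D x q * K q z) :
    FVpost π (Qs.biUnion T) C = FVpost π Qs D := by
  unfold FVpost
  rw [sum_biUnion hT]
  refine sum_congr rfl fun q hq => ?_
  have hmax : ∀ z ∈ T q, univ.sup' univ_nonempty (fun x => π x * C x z) =
      univ.sup' univ_nonempty (fun x => π x * D x q) * K q z := by
    intro z hz
    simp only [sup'_mul₀ (hK₀ q hq z hz), hC _ q hq z hz, mul_assoc]
  rw [sum_congr rfl hmax, ← mul_sum, hK q hq, mul_one]

end Refinement

theorem scheduled_eq_parallel_of_no_shared_actions_general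
    {A X₁ X₂ : Type*} [DecidableEq A] [Fintype X₁] [Fintype X₂]
    [Nonempty X₁] [Nonempty X₂]
    (Y₁ Y₂ : Finset (List A))
    (C₁ : X₁ → List A → ℝ) (C₂ : X₂ → List A → ℝ)
    (hact : ∀ y₁ ∈ Y₁, ∀ y₂ ∈ Y₂, ∀ α ∈ y₁, ∀ β ∈ y₂, α ≠ β)
    (π : X₁ × X₂ → ℝ)
    (S : List A → List A → List A → ℝ) (hS : IsScheduler Y₁ Y₂ S) :
    FMI π (IntSet Y₁ Y₂) (Comp Y₁ Y₂ C₁ C₂ S) = FMI π (Y₁ ×ˢ Y₂) (Par C₁ C₂) ∧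
      FMEL π (IntSet Y₁ Y₂) (Comp Y₁ Y₂ C₁ C₂ S) = FMEL π (Y₁ ×ˢ Y₂) (Par C₁ C₂) := by
  have hT := pairwiseDisjoint_IntF hact
  have hS₀ : ∀ q ∈ Y₁ ×ˢ Y₂, ∀ y ∈ IntF q.1 q.2, 0 ≤ S q.1 q.2 y := fun q hq y _ =>
    (hS q.1 (mem_product.1 hq).1 q.2 (mem_product.1 hq).2).1 y
  have hS₁ : ∀ q ∈ Y₁ ×ˢ Y₂, ∑ y ∈ IntF q.1 q.2, S q.1 q.2 y = 1 := fun q hq =>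
    (hS q.1 (mem_product.1 hq).1 q.2 (mem_product.1 hq).2).2.2
  have hComp : ∀ x, ∀ q ∈ Y₁ ×ˢ Y₂, ∀ y ∈ IntF q.1 q.2,
      Comp Y₁ Y₂ C₁ C₂ S x y = Par C₁ C₂ x q * S q.1 q.2 y :=
    fun x _ hq _ hy => Comp_eq_Par_mul C₁ C₂ hS hact x hq hy
  rw [IntSet_eq_biUnion, FMEL, FMEL, FMI_biUnion_of_eq_mul hT hS₁ hComp,
    FVpost_biUnion_of_eq_mul hT hS₀ hS₁ hComp]
  exact ⟨rfl, rfl⟩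

/-- if the traces of the two component channels share no actions,
then scheduled composition has the same mutual information and min-entropy
leakage as parallel composition, for every scheduler. -/
theorem scheduled_eq_parallel_of_no_shared_actions
    {A X₁ X₂ : Type*} [DecidableEq A] [Fintype X₁] [Fintype X₂]
    [Nonempty X₁] [Nonempty X₂]
    (Y₁ Y₂ : Finset (List A))
    (C₁ : X₁ → List A → ℝ) (C₂ : X₂ → List A → ℝ)
    (hC₁ : FIsChannel Y₁ C₁) (hC₂ : FIsChannel Y₂ C₂)
    (hact : ∀ y₁ ∈ Y₁, ∀ y₂ ∈ Y₂, ∀ α ∈ y₁, ∀ β ∈ y₂, α ≠ β)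
    (π : X₁ × X₂ → ℝ) (hπ : IsPrior π)
    (S : List A → List A → List A → ℝ) (hS : IsScheduler Y₁ Y₂ S) :
    FMI π (IntSet Y₁ Y₂) (Comp Y₁ Y₂ C₁ C₂ S) = FMI π (Y₁ ×ˢ Y₂) (Par C₁ C₂) ∧
      FMEL π (IntSet Y₁ Y₂) (Comp Y₁ Y₂ C₁ C₂ S) = FMEL π (Y₁ ×ˢ Y₂) (Par C₁ C₂) :=
  scheduled_eq_parallel_of_no_shared_actions_general Y₁ Y₂ C₁ C₂ hact π S hS
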